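/- Let A be a unital C*-algebra and let u be a unitary in A with ‖u − 1‖ < 1. Then for every a in A and every s in [0,1], the unitary exp(s·log u) (defined via the holomorphic functional calculus, with log the principal branch) satisfies ‖[exp(s·log u), a]‖ ≤ ‖[u, a]‖ / (1 − ‖u − 1‖). -/

import Mathlib

/-!
Write `t = u - 1`, so that `v = ∑ cₙ tⁿ` with `cₙ = binom(s, n)`. The Leibniz rule
`[tⁿ⁺¹, a] = t [tⁿ, a] + [t, a] tⁿ` gives `‖[tⁿ⁺¹, a]‖ ≤ (n + 1) ‖t‖ⁿ ‖[t, a]‖`, and for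
`s ∈ [0, 1]` the binomial coefficients satisfy `(n + 1) |binom(s, n + 1)| ≤ 1`. Since `[1, a] = 0`
and `[t, a] = [u, a]`, the commutator `[v, a]` is dominated by the geometric series
`∑ ‖t‖ⁿ ‖[u, a]‖ = ‖[u, a]‖ / (1 - ‖t‖)`.
-/

open Finset

theorem norm_pow_succ_mul_sub_mul_pow_succ_le {A : Type*} [NormedRing A] (t a : A) (n : ℕ) :
    ‖t ^ (n + 1) * a - a * t ^ (n + 1)‖ ≤ (n + 1) * ‖t‖ ^ n * ‖t * a - a * t‖ := by
  induction n with
  | zero => simp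
  | succ n ih =>
    have leibniz : t ^ (n + 2) * a - a * t ^ (n + 2)
        = t * (t ^ (n + 1) * a - a * t ^ (n + 1)) + (t * a - a * t) * t ^ (n + 1) := by
      rw [pow_succ' t (n + 1)]; noncomm_ring
    have hpow : ‖t ^ (n + 1)‖ ≤ ‖t‖ ^ (n + 1) := norm_pow_le' t n.succ_pos
    calc ‖t ^ (n + 2) * a - a * t ^ (n + 2)‖
        ≤ ‖t‖ * ‖t ^ (n + 1) * a - a * t ^ (n + 1)‖ + ‖t * a - a * t‖ * ‖t ^ (n + 1)‖ := by
          rw [leibniz]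
          exact (norm_add_le _ _).trans (add_le_add (norm_mul_le _ _) (norm_mul_le _ _))
      _ ≤ ‖t‖ * ((n + 1) * ‖t‖ ^ n * ‖t * a - a * t‖) + ‖t * a - a * t‖ * ‖t‖ ^ (n + 1) := by
          gcongr
      _ = ((n + 1 : ℕ) + 1) * ‖t‖ ^ (n + 1) * ‖t * a - a * t‖ := by push_cast; ring

/-- When the series is not summable its `tsum` is `0`, and the bound holds trivially. -/
theorem norm_tsum_smul_pow_mul_sub_le {𝕜 A : Type*} [NormedField 𝕜] [NormedRing A]
    [NormedAlgebra 𝕜 A] {t : A} (ht : ‖t‖ < 1) {c : ℕ → 𝕜}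
    (hc : ∀ n : ℕ, (n + 1) * ‖c (n + 1)‖ ≤ 1) (a : A) :
    ‖(∑' n, c n • t ^ n) * a - a * ∑' n, c n • t ^ n‖ ≤ ‖t * a - a * t‖ / (1 - ‖t‖) := by
  set D := ‖t * a - a * t‖
  have hbound : 0 ≤ D / (1 - ‖t‖) := div_nonneg (norm_nonneg _) (by linarith)
  by_cases hsum : Summable fun n => c n • t ^ n
  swap
  · simpa [tsum_eq_zero_of_not_summable hsum] using hbound
  set f : ℕ → A := fun n => c n • t ^ n * a - a * (c n • t ^ n)
  have hf : HasSum f ((∑' n, c n • t ^ n) * a - a * ∑' n, c n • t ^ n) :=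
    (hsum.hasSum.mul_right a).sub (hsum.hasSum.mul_left a)
  have hf_shift : HasSum (fun n => f (n + 1))
      ((∑' n, c n • t ^ n) * a - a * ∑' n, c n • t ^ n) := by
    rw [hasSum_nat_add_iff 1]
    simpa [f] using hf
  have hgeom : HasSum (fun n : ℕ => ‖t‖ ^ n * D) (D / (1 - ‖t‖)) := by
    simpa [div_eq_inv_mul] using (hasSum_geometric_of_lt_one (norm_nonneg t) ht).mul_right D
  refine hf_shift.norm_le_of_bounded hgeom fun n => ?_
  have hfn : f (n + 1) = c (n + 1) • (t ^ (n + 1) * a - a * t ^ (n + 1)) := by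
    simp only [f, smul_mul_assoc, mul_smul_comm, smul_sub]
  calc ‖f (n + 1)‖ = ‖c (n + 1)‖ * ‖t ^ (n + 1) * a - a * t ^ (n + 1)‖ := by
        rw [hfn, norm_smul]
    _ ≤ ‖c (n + 1)‖ * ((n + 1) * ‖t‖ ^ n * D) := by
        gcongr; exact norm_pow_succ_mul_sub_mul_pow_succ_le t a n
    _ = ((n + 1) * ‖c (n + 1)‖) * (‖t‖ ^ n * D) := by ring
    _ ≤ 1 * (‖t‖ ^ n * D) := by gcongr; exact hc n
    _ = ‖t‖ ^ n * D := one_mul _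

theorem abs_prod_range_succ_sub_le_factorial {s : ℝ} (hs : s ∈ Set.Icc (0 : ℝ) 1) (n : ℕ) :
    |∏ i ∈ range (n + 1), (s - i)| ≤ n.factorial := by
  induction n with
  | zero => simpa using abs_le.mpr ⟨by linarith [hs.1], hs.2⟩
  | succ n ih =>
    have hfactor : |s - (n + 1 : ℕ)| ≤ (n + 1 : ℕ) := by
      rw [abs_le]; push_cast; constructor <;> linarith [hs.1, hs.2]
    rw [prod_range_succ, abs_mul, Nat.factorial_succ, Nat.cast_mul, mul_comm ((n + 1 : ℕ) : ℝ)]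
    exact mul_le_mul ih hfactor (abs_nonneg _) (Nat.cast_nonneg _)

theorem succ_mul_abs_prod_range_sub_div_factorial_le_one {s : ℝ} (hs : s ∈ Set.Icc (0 : ℝ) 1)
    (n : ℕ) : (n + 1) * |(∏ i ∈ range (n + 1), (s - i)) / (n + 1).factorial| ≤ 1 := by
  have hfac : (0 : ℝ) < (n + 1).factorial := by exact_mod_cast (n + 1).factorial_pos
  rw [abs_div, abs_of_pos hfac, ← mul_div_assoc, div_le_one hfac, Nat.factorial_succ,
    Nat.cast_mul]
  push_cast
  gcongr
  exact abs_prod_range_succ_sub_le_factorial hs n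

theorem stmt0_general (A : Type*) [CStarAlgebra A] [NormedAlgebra ℂ A]
    (u : A) (hu1 : ‖u - 1‖ < 1)
    (s : ℝ) (hs : s ∈ Set.Icc (0 : ℝ) 1)
    (v : A)
    (hv : v = ∑' n : ℕ,
      (((∏ i ∈ Finset.range n, (s - (i : ℝ))) / (n.factorial : ℝ) : ℝ) : ℂ) • (u - 1) ^ n)
    (a : A) :
    ‖v * a - a * v‖ ≤ ‖u * a - a * u‖ / (1 - ‖u - 1‖) := by
  have hcomm : (u - 1) * a - a * (u - 1) = u * a - a * u := by noncomm_ring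
  rw [← hcomm, hv]
  refine norm_tsum_smul_pow_mul_sub_le hu1 (fun n => ?_) a
  rw [Complex.norm_real, Real.norm_eq_abs]
  exact_mod_cast succ_mul_abs_prod_range_sub_div_factorial_le_one hs n

/-- Let `A` be a unital C*-algebra and `u` a unitary with `‖u - 1‖ < 1`.
For `s ∈ [0,1]`, let `v = exp(s·log u)` be defined by the power series `f(u-1)` where
`f(t) = exp(s·log(1+t)) = (1+t)^s`, whose Taylor coefficients at `0` are
`(∏_{i<n} (s-i)) / n!`.  Then `‖[v, a]‖ ≤ ‖[u, a]‖ / (1 - ‖u - 1‖)` for every `a ∈ A`. -/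
theorem stmt0 (A : Type*) [CStarAlgebra A] [NormedAlgebra ℂ A]
    (u : A) (hu : u ∈ unitary A) (hu1 : ‖u - 1‖ < 1)
    (s : ℝ) (hs : s ∈ Set.Icc (0 : ℝ) 1)
    (v : A)
    (hv : v = ∑' n : ℕ,
      (((∏ i ∈ Finset.range n, (s - (i : ℝ))) / (n.factorial : ℝ) : ℝ) : ℂ) • (u - 1) ^ n)
    (a : A) :
    ‖v * a - a * v‖ ≤ ‖u * a - a * u‖ / (1 - ‖u - 1‖) :=
  stmt0_general A u hu1 s hs v hv a
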